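/- arXiv:1503.00968 — 2 statements merged into one kernel-verified Lean document; each statement's English description precedes it below -/
import Mathlib

section
/- Let (M̂, ĝ, ξ) be a local cone (i.e., ∇̂ξ = Id) and let u be a parallel vector field on M̂ with ĝ(u,u) = 0. If ĝ(u,ξ) = 0 on some open subset U, then u vanishes identically on U. -/
open Real Matrix Finset

/-! Coordinate framework for pseudo-Riemannian geometry on `ℝ^ι`:
metrics are matrix-valued functions, and the Levi-Civita connection is given by
the Christoffel symbols. -/

variable {ι : Type} [Fintype ι] [DecidableEq ι]

/-- Partial derivative in the `i`-th coordinate direction. -/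
noncomputable def pd (i : ι) (f : (ι → ℝ) → ℝ) (x : ι → ℝ) : ℝ :=
  fderiv ℝ f x (Pi.single i 1)

/-- Christoffel symbols `Γ^k_{ij}` of a metric `g` in coordinates. -/
noncomputable def christoffel (g : (ι → ℝ) → Matrix ι ι ℝ) (k i j : ι) (x : ι → ℝ) : ℝ :=
  (1 / 2) * ∑ l, (g x)⁻¹ k l *
    (pd i (fun y => g y j l) x + pd j (fun y => g y i l) x - pd l (fun y => g y i j) x)

/-- Covariant derivative `(∇_{∂k} L)_{ij}` of a `(0,2)`-tensor field `L`. -/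
noncomputable def covDer2 (g L : (ι → ℝ) → Matrix ι ι ℝ) (k i j : ι) (x : ι → ℝ) : ℝ :=
  pd k (fun y => L y i j) x - (∑ l, christoffel g l k i x * L x l j)
    - ∑ l, christoffel g l k j x * L x i l

/-- Covariant derivative `(∇_{∂k} Λ)_i` of a 1-form `Λ`. -/
noncomputable def covDer1 (g : (ι → ℝ) → Matrix ι ι ℝ) (Λ : (ι → ℝ) → ι → ℝ)
    (k i : ι) (x : ι → ℝ) : ℝ :=
  pd k (fun y => Λ y i) x - ∑ l, christoffel g l k i x * Λ x l

/-- Covariant derivative `(∇_{∂k} X)^l` of a vector field `X`. -/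
noncomputable def covDerVF (g : (ι → ℝ) → Matrix ι ι ℝ) (X : (ι → ℝ) → ι → ℝ)
    (k l : ι) (x : ι → ℝ) : ℝ :=
  pd k (fun y => X y l) x + ∑ m, christoffel g l k m x * X x m

/-- The `l`-th component of `R(∂i,∂j)∂k`, with the curvature convention
`R(X,Y)Z = ∇_X ∇_Y Z − ∇_Y ∇_X Z − ∇_{[X,Y]} Z`. -/
noncomputable def riem (g : (ι → ℝ) → Matrix ι ι ℝ) (l i j k : ι) (x : ι → ℝ) : ℝ :=
  pd i (christoffel g l j k) x - pd j (christoffel g l i k) x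
    + (∑ m, christoffel g l i m x * christoffel g m j k x)
    - ∑ m, christoffel g l j m x * christoffel g m i k x

/-- Ricci tensor `Ric(∂i,∂j) = trace (Z ↦ R(Z,∂i)∂j)`. -/
noncomputable def ricci (g : (ι → ℝ) → Matrix ι ι ℝ) (i j : ι) (x : ι → ℝ) : ℝ :=
  ∑ l, riem g l l i j x

/-- All matrix entries of `g` are smooth functions. -/
def SmoothM (g : (ι → ℝ) → Matrix ι ι ℝ) : Prop :=
  ∀ i j, ContDiff ℝ (⊤ : ℕ∞) fun x => g x i j

/-- `g` is symmetric. -/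
def SymM (g : (ι → ℝ) → Matrix ι ι ℝ) : Prop := ∀ x, (g x)ᵀ = g x

/-- `g` is everywhere nondegenerate. -/
def NondegM (g : (ι → ℝ) → Matrix ι ι ℝ) : Prop := ∀ x, (g x).det ≠ 0

/-- The projective equation `∇_X L = X^♭ ⊙ Λ`; in coordinates
`(∇_{∂k} L)_{ij} = g_{ki} Λ_j + g_{kj} Λ_i`. -/
def ProjEqn (g L : (ι → ℝ) → Matrix ι ι ℝ) (Λ : (ι → ℝ) → ι → ℝ) : Prop :=
  ∀ k i j x, covDer2 g L k i j x = g x k i * Λ x j + g x k j * Λ x i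

/-- `ξ` is a cone vector field: `∇̂_X ξ = X` for all `X`. -/
def IsConeVF (g : (ι → ℝ) → Matrix ι ι ℝ) (ξ : (ι → ℝ) → ι → ℝ) : Prop :=
  ∀ k l x, covDerVF g ξ k l x = if k = l then 1 else 0

section AuxLemmas

variable {ι : Type} [Fintype ι] [DecidableEq ι]

lemma pd_mul (i : ι) (f h : (ι → ℝ) → ℝ) (x : ι → ℝ) (hf : DifferentiableAt ℝ f x)
    (hh : DifferentiableAt ℝ h x) :
    pd i (fun y => f y * h y) x = pd i f x * h x + f x * pd i h x := by
  unfold pd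
  rw [fderiv_fun_mul hf hh]
  simp [smul_eq_mul]
  ring

lemma pd_sum {α : Type*} (s : Finset α) (i : ι) (F : α → (ι → ℝ) → ℝ) (x : ι → ℝ)
    (hF : ∀ a ∈ s, DifferentiableAt ℝ (F a) x) :
    pd i (fun y => ∑ a ∈ s, F a y) x = ∑ a ∈ s, pd i (F a) x := by
  unfold pd
  rw [fderiv_fun_sum hF]
  simp

/-- Metric compatibility: `∂_k g_{ij} = Γ^l_{ki} g_{lj} + Γ^l_{kj} g_{il}`. -/
lemma metric_compat (g : (ι → ℝ) → Matrix ι ι ℝ) (hgs : SymM g) (hgn : NondegM g)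
    (k i j : ι) (x : ι → ℝ) :
    pd k (fun y => g y i j) x
      = (∑ l, christoffel g l k i x * g x l j) + ∑ l, christoffel g l k j x * g x i l := by
  have hginv : (g x)⁻¹ * g x = 1 := Matrix.nonsing_inv_mul _ (isUnit_iff_ne_zero.2 (hgn x))
  have hsymm : ∀ a b, g x a b = g x b a := by
    intro a b
    conv_rhs => rw [← hgs x]
    rfl
  have hinvsymm : ∀ a b, (g x)⁻¹ a b = (g x)⁻¹ b a := by
    intro a b
    have h : ((g x)⁻¹)ᵀ = (g x)⁻¹ := by
      rw [Matrix.transpose_nonsing_inv, hgs x]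
    conv_rhs => rw [← h]
    rfl
  have hdelta : ∀ m a, (∑ l, (g x)⁻¹ l m * g x l a) = if m = a then 1 else 0 := by
    intro m a
    have h : ((g x)⁻¹ * g x) m a = if m = a then 1 else 0 := by
      rw [hginv, Matrix.one_apply]
    rw [← h, Matrix.mul_apply]
    exact Finset.sum_congr rfl fun l _ => by rw [hinvsymm l m]
  have key : ∀ a b : ι, (∑ l, christoffel g l k a x * g x l b)
      = (1/2) * (pd k (fun y => g y a b) x + pd a (fun y => g y k b) x
        - pd b (fun y => g y k a) x) := by
    intro a b
    simp only [christoffel]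
    have st1 : ∀ l : ι, ((1:ℝ)/2 * ∑ m, (g x)⁻¹ l m *
        (pd k (fun y => g y a m) x + pd a (fun y => g y k m) x - pd m (fun y => g y k a) x))
          * g x l b
        = ∑ m, (1/2) * ((g x)⁻¹ l m * g x l b *
          (pd k (fun y => g y a m) x + pd a (fun y => g y k m) x
            - pd m (fun y => g y k a) x)) := by
      intro l
      rw [Finset.mul_sum, Finset.sum_mul]
      exact Finset.sum_congr rfl fun m _ => by ring
    rw [Finset.sum_congr rfl fun l _ => st1 l, Finset.sum_comm]
    have st2 : ∀ m : ι, (∑ l, (1/2:ℝ) * ((g x)⁻¹ l m * g x l b *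
        (pd k (fun y => g y a m) x + pd a (fun y => g y k m) x
          - pd m (fun y => g y k a) x)))
        = (if m = b then 1 else 0) * ((1/2) *
          (pd k (fun y => g y a m) x + pd a (fun y => g y k m) x
            - pd m (fun y => g y k a) x)) := by
      intro m
      rw [← hdelta m b, Finset.sum_mul]
      exact Finset.sum_congr rfl fun l _ => by ring
    rw [Finset.sum_congr rfl fun m _ => st2 m]
    simp
  have e0 : (∑ l, christoffel g l k j x * g x i l) = ∑ l, christoffel g l k j x * g x l i :=
    Finset.sum_congr rfl fun l _ => by rw [hsymm i l]
  rw [e0, key i j, key j i]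
  have e1 : (fun y => g y j i) = (fun y => g y i j) := by
    funext y
    conv_lhs => rw [← hgs y]
    rfl
  rw [e1]
  ring

end AuxLemmas

/-- on a local cone `(M̂, ĝ, ξ)` (`∇̂ξ = Id`), if `u` is a parallel null
vector field with `ĝ(u,ξ) = 0` on an open set `U`, then `u` vanishes on `U`. -/
theorem statement_7 {ι : Type} [Fintype ι] [DecidableEq ι]
    (g : (ι → ℝ) → Matrix ι ι ℝ) (ξ u : (ι → ℝ) → ι → ℝ) (U : Set (ι → ℝ))
    (hg : SmoothM g) (hgs : SymM g) (hgn : NondegM g)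
    (hξ : ∀ l, ContDiff ℝ (⊤ : ℕ∞) fun x => ξ x l)
    (hu : ∀ l, ContDiff ℝ (⊤ : ℕ∞) fun x => u x l)
    (hcone : IsConeVF g ξ)
    (hupar : ∀ k l x, covDerVF g u k l x = 0)
    (hunull : ∀ x, (∑ i, ∑ j, g x i j * u x i * u x j) = 0)
    (hUopen : IsOpen U)
    (hperp : ∀ x ∈ U, (∑ i, ∑ j, g x i j * u x i * ξ x j) = 0) :
    ∀ x ∈ U, ∀ l, u x l = 0 := by
  intro x hxU
  -- differentiability facts
  have hgd : ∀ i j (y : ι → ℝ), DifferentiableAt ℝ (fun z => g z i j) y := fun i j y =>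
    ((hg i j).differentiable (by simp)).differentiableAt
  have hud : ∀ i (y : ι → ℝ), DifferentiableAt ℝ (fun z => u z i) y := fun i y =>
    ((hu i).differentiable (by simp)).differentiableAt
  have hξd : ∀ i (y : ι → ℝ), DifferentiableAt ℝ (fun z => ξ z i) y := fun i y =>
    ((hξ i).differentiable (by simp)).differentiableAt
  set f : (ι → ℝ) → ℝ := fun y => ∑ i, ∑ j, g y i j * u y i * ξ y j with hf
  -- derivative of u and ξ components
  have hDu : ∀ k l (y : ι → ℝ), pd k (fun z => u z l) y
      = -(∑ m, christoffel g l k m y * u y m) := by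
    intro k l y
    have := hupar k l y
    unfold covDerVF at this
    linarith
  have hDξ : ∀ k l (y : ι → ℝ), pd k (fun z => ξ z l) y
      = (if k = l then 1 else 0) - ∑ m, christoffel g l k m y * ξ y m := by
    intro k l y
    have := hcone k l y
    unfold covDerVF at this
    linarith
  -- key computation: ∂_k f = ∑_i g_{ik} u^i
  have hkey : ∀ k (y : ι → ℝ), pd k f y = ∑ i, g y i k * u y i := by
    intro k y
    have step1 : pd k f y = ∑ i, ∑ j,
        ((pd k (fun z => g z i j) y * u y i + g y i j * pd k (fun z => u z i) y) * ξ y j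
          + g y i j * u y i * pd k (fun z => ξ z j) y) := by
      rw [hf]
      rw [pd_sum Finset.univ k _ y (fun i _ => by
        exact DifferentiableAt.fun_sum fun j _ =>
          (((hgd i j y).mul (hud i y)).mul (hξd j y)))]
      refine Finset.sum_congr rfl fun i _ => ?_
      rw [pd_sum Finset.univ k _ y (fun j _ => ((hgd i j y).fun_mul (hud i y)).fun_mul (hξd j y))]
      refine Finset.sum_congr rfl fun j _ => ?_
      rw [pd_mul k _ _ y ((hgd i j y).fun_mul (hud i y)) (hξd j y),
        pd_mul k _ _ y (hgd i j y) (hud i y)]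
    rw [step1]
    have step2 : ∀ i j : ι,
        ((pd k (fun z => g z i j) y * u y i + g y i j * pd k (fun z => u z i) y) * ξ y j
          + g y i j * u y i * pd k (fun z => ξ z j) y)
        = (((∑ l, christoffel g l k i y * g y l j) + ∑ l, christoffel g l k j y * g y i l)
            * u y i + g y i j * (-(∑ m, christoffel g i k m y * u y m))) * ξ y j
          + g y i j * u y i *
            ((if k = j then 1 else 0) - ∑ m, christoffel g j k m y * ξ y m) := by
      intro i j
      rw [metric_compat g hgs hgn k i j y, hDu k i y, hDξ k j y]
    rw [Finset.sum_congr rfl fun i _ => Finset.sum_congr rfl fun j _ => step2 i j]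
    -- expand and cancel
    have expand : ∀ i j : ι,
        (((∑ l, christoffel g l k i y * g y l j) + ∑ l, christoffel g l k j y * g y i l)
            * u y i + g y i j * (-(∑ m, christoffel g i k m y * u y m))) * ξ y j
          + g y i j * u y i *
            ((if k = j then 1 else 0) - ∑ m, christoffel g j k m y * ξ y m)
        = (∑ l, christoffel g l k i y * g y l j * u y i * ξ y j)
          + (∑ l, christoffel g l k j y * g y i l * u y i * ξ y j)
          - (∑ m, g y i j * christoffel g i k m y * u y m * ξ y j)
          + g y i j * u y i * (if k = j then 1 else 0)
          - (∑ m, g y i j * u y i * christoffel g j k m y * ξ y m) := by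
      intro i j
      have hA : (∑ l, christoffel g l k i y * g y l j * u y i * ξ y j)
          = (∑ l, christoffel g l k i y * g y l j) * u y i * ξ y j := by
        rw [Finset.sum_mul, Finset.sum_mul]
      have hB : (∑ l, christoffel g l k j y * g y i l * u y i * ξ y j)
          = (∑ l, christoffel g l k j y * g y i l) * u y i * ξ y j := by
        rw [Finset.sum_mul, Finset.sum_mul]
      have hC : (∑ m, g y i j * christoffel g i k m y * u y m * ξ y j)
          = g y i j * (∑ m, christoffel g i k m y * u y m) * ξ y j := by
        rw [Finset.mul_sum, Finset.sum_mul]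
        exact Finset.sum_congr rfl fun m _ => by ring
      have hE : (∑ m, g y i j * u y i * christoffel g j k m y * ξ y m)
          = g y i j * u y i * (∑ m, christoffel g j k m y * ξ y m) := by
        rw [Finset.mul_sum]
        exact Finset.sum_congr rfl fun m _ => by ring
      rw [hA, hB, hC, hE]
      ring
    rw [Finset.sum_congr rfl fun i _ => Finset.sum_congr rfl fun j _ => expand i j]
    simp only [Finset.sum_add_distrib, Finset.sum_sub_distrib]
    have c1 : (∑ i, ∑ j, ∑ l, christoffel g l k i y * g y l j * u y i * ξ y j)
        = ∑ i, ∑ j, ∑ m, g y i j * christoffel g i k m y * u y m * ξ y j := by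
      calc (∑ i, ∑ j, ∑ l, christoffel g l k i y * g y l j * u y i * ξ y j)
          = ∑ i, ∑ l, ∑ j, christoffel g l k i y * g y l j * u y i * ξ y j :=
            Finset.sum_congr rfl fun i _ => Finset.sum_comm
        _ = ∑ l, ∑ i, ∑ j, christoffel g l k i y * g y l j * u y i * ξ y j :=
            Finset.sum_comm
        _ = ∑ l, ∑ j, ∑ i, christoffel g l k i y * g y l j * u y i * ξ y j :=
            Finset.sum_congr rfl fun l _ => Finset.sum_comm
        _ = ∑ i, ∑ j, ∑ m, g y i j * christoffel g i k m y * u y m * ξ y j :=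
            Finset.sum_congr rfl fun l _ => Finset.sum_congr rfl fun j _ =>
              Finset.sum_congr rfl fun i _ => by ring
    have c2 : (∑ i, ∑ j, ∑ l, christoffel g l k j y * g y i l * u y i * ξ y j)
        = ∑ i, ∑ j, ∑ m, g y i j * u y i * christoffel g j k m y * ξ y m := by
      calc (∑ i, ∑ j, ∑ l, christoffel g l k j y * g y i l * u y i * ξ y j)
          = ∑ i, ∑ l, ∑ j, christoffel g l k j y * g y i l * u y i * ξ y j :=
            Finset.sum_congr rfl fun i _ => Finset.sum_comm
        _ = ∑ i, ∑ j, ∑ m, g y i j * u y i * christoffel g j k m y * ξ y m :=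
            Finset.sum_congr rfl fun i _ => Finset.sum_congr rfl fun l _ =>
              Finset.sum_congr rfl fun j _ => by ring
    rw [c1, c2]
    have c3 : (∑ i, ∑ j, g y i j * u y i * (if k = j then 1 else 0))
        = ∑ i, g y i k * u y i := by
      refine Finset.sum_congr rfl fun i _ => ?_
      simp [eq_comm]
    rw [c3]
    ring
  -- f vanishes near x, so its derivative vanishes at x
  have hfd0 : ∀ k, pd k f x = 0 := by
    intro k
    have hev : f =ᶠ[nhds x] fun _ => (0 : ℝ) :=
      Filter.eventuallyEq_of_mem (hUopen.mem_nhds hxU) fun y hy => hperp y hy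
    unfold pd
    rw [hev.fderiv_eq]
    simp
  -- hence ∑_i g_{ik} u^i = 0 for all k, i.e. (g x) *ᵥ (u x) = 0
  have hmv : (g x) *ᵥ (u x) = 0 := by
    funext k
    have h0 := (hfd0 k).symm.trans (hkey k x)
    have hsymm : ∀ a b, g x a b = g x b a := by
      intro a b
      conv_rhs => rw [← hgs x]
      rfl
    simp only [Matrix.mulVec, dotProduct, Pi.zero_apply]
    calc (∑ i, g x k i * u x i) = ∑ i, g x i k * u x i :=
          Finset.sum_congr rfl fun i _ => by rw [hsymm k i]
      _ = 0 := h0.symm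
  have : u x = (g x)⁻¹ *ᵥ ((g x) *ᵥ u x) := by
    rw [Matrix.mulVec_mulVec, Matrix.nonsing_inv_mul _ (isUnit_iff_ne_zero.2 (hgn x))]
    simp
  intro l
  rw [this, hmv]
  simp
end

section
/- Let (M̂ = ℝ_{>0} × ℝ × N, ĝ = dr² + r²(−dt² + e^{2t}h)) where (N,h) is a pseudo-Riemannian manifold. Then the vector field v = e^t(∂_r − (1/r)∂_t) is parallel with respect to the Levi-Civita connection of ĝ and satisfies ĝ(v,v) = 0. -/
open Real Matrix Finset

/-! Coordinate framework for pseudo-Riemannian geometry on `ℝ^ι`: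
metrics are matrix-valued functions, and the Levi-Civita connection is given by
the Christoffel symbols. -/

variable {ι : Type} [Fintype ι] [DecidableEq ι]

/-- The metric `ĝ = dr² + r²(−dt² + e^{2t} h)` on `ℝ_{>0} × ℝ × N`, in coordinates where
`r = x (Sum.inl 0)` and `t = x (Sum.inl 1)`. -/
noncomputable def gHatGen {ι : Type} [Fintype ι] [DecidableEq ι]
    (h : (ι → ℝ) → Matrix ι ι ℝ) (x : (Fin 2 ⊕ ι) → ℝ) :
    Matrix (Fin 2 ⊕ ι) (Fin 2 ⊕ ι) ℝ :=
  Matrix.fromBlocks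
    (Matrix.of fun a b : Fin 2 =>
      if a = 0 ∧ b = 0 then 1
      else if a = 1 ∧ b = 1 then -(x (Sum.inl 0)) ^ 2 else 0)
    0 0
    (((x (Sum.inl 0)) ^ 2 * Real.exp (2 * x (Sum.inl 1))) • h (x ∘ Sum.inr))

lemma pd_eq {κ : Type} [Fintype κ] [DecidableEq κ] {f : (κ → ℝ) → ℝ} {x : κ → ℝ}
    {f' : (κ → ℝ) →L[ℝ] ℝ} (hf : HasFDerivAt f f' x) (i : κ) :
    pd i f x = f' (Pi.single i 1) := by rw [pd, hf.fderiv]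

lemma pd_const {κ : Type} [Fintype κ] [DecidableEq κ] (c : ℝ) (i : κ) (x : κ → ℝ) :
    pd i (fun _ => c) x = 0 := by rw [pd, fderiv_fun_const]; simp

section
variable {κ : Type} [Fintype κ] [DecidableEq κ]

lemma hasFDerivAt_sq (j : κ) (x : κ → ℝ) :
    HasFDerivAt (fun y : κ → ℝ => (y j)^2)
      ((x j) • ContinuousLinearMap.proj (R := ℝ) j
        + (x j) • ContinuousLinearMap.proj (R := ℝ) j) x := by
  have : (fun y : κ → ℝ => (y j)^2) = fun y => y j * y j := by funext y; ring
  rw [this]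
  exact ((ContinuousLinearMap.proj (R := ℝ) (φ := fun _ : κ => ℝ) j).hasFDerivAt (x := x)).mul
    ((ContinuousLinearMap.proj (R := ℝ) (φ := fun _ : κ => ℝ) j).hasFDerivAt (x := x))

end

lemma pd_negsq (i : Fin 2 ⊕ ι) (x : (Fin 2 ⊕ ι) → ℝ) :
    pd i (fun y => -(y (Sum.inl 0))^2) x = if i = Sum.inl 0 then -(2 * x (Sum.inl 0)) else 0 := by
  rw [pd_eq (hasFDerivAt_sq (Sum.inl 0) x).fun_neg]
  by_cases hi : i = Sum.inl 0 <;> simp [hi, Pi.single_apply, eq_comm] <;> ring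

/-- restriction CLM -/
noncomputable def resR (ι : Type) [Fintype ι] [DecidableEq ι] :
    ((Fin 2 ⊕ ι) → ℝ) →L[ℝ] (ι → ℝ) :=
  ContinuousLinearMap.pi (fun c : ι => ContinuousLinearMap.proj (Sum.inr c))

lemma hasFDerivAt_hentry (h : (ι → ℝ) → Matrix ι ι ℝ) (hh : SmoothM h)
    (a b : ι) (x : (Fin 2 ⊕ ι) → ℝ) :
    HasFDerivAt (fun y : (Fin 2 ⊕ ι) → ℝ => h (y ∘ Sum.inr) a b)
      ((fderiv ℝ (fun z => h z a b) (x ∘ Sum.inr)).comp (resR ι)) x := by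
  have h1 : HasFDerivAt (fun z => h z a b) (fderiv ℝ (fun z => h z a b) (x ∘ Sum.inr))
      (x ∘ Sum.inr) := (((hh a b).differentiable (by simp)) _).hasFDerivAt
  exact h1.comp x ((resR ι).hasFDerivAt (x := x))

lemma pd_block (h : (ι → ℝ) → Matrix ι ι ℝ) (hh : SmoothM h) (a b : ι) (m : Fin 2)
    (x : (Fin 2 ⊕ ι) → ℝ) :
    pd (Sum.inl m) (fun y => gHatGen h y (Sum.inr a) (Sum.inr b)) x
      = (if m = 0 then 2 * x (Sum.inl 0) * Real.exp (2 * x (Sum.inl 1))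
         else 2 * (x (Sum.inl 0))^2 * Real.exp (2 * x (Sum.inl 1))) * h (x ∘ Sum.inr) a b := by
  have he : HasFDerivAt (fun y : (Fin 2 ⊕ ι) → ℝ => Real.exp (2 * y (Sum.inl 1)))
      (Real.exp (2 * x (Sum.inl 1)) • ((2:ℝ) • ContinuousLinearMap.proj (R := ℝ)
        (φ := fun _ : Fin 2 ⊕ ι => ℝ) (Sum.inl 1))) x :=
    (((ContinuousLinearMap.proj (R := ℝ) (φ := fun _ : Fin 2 ⊕ ι => ℝ)
      (Sum.inl 1)).hasFDerivAt (x := x)).const_mul 2).exp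
  have hF := ((hasFDerivAt_sq (Sum.inl 0) x).mul he).mul (hasFDerivAt_hentry h hh a b x)
  have hpd : pd (Sum.inl m) (fun y => gHatGen h y (Sum.inr a) (Sum.inr b)) x
      = _ := pd_eq hF (Sum.inl m)
  rw [hpd]
  have hres : ∀ n : Fin 2, (resR ι) (Pi.single (Sum.inl n) (1:ℝ)) = 0 := by
    intro n; funext c; simp [resR, Pi.single_apply]
  fin_cases m <;>
    simp [hres, Pi.single_apply] <;> ring

lemma gHat_inv (h : (ι → ℝ) → Matrix ι ι ℝ) (hhn : NondegM h)
    (x : (Fin 2 ⊕ ι) → ℝ) (hr : x (Sum.inl 0) ≠ 0) :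
    (gHatGen h x)⁻¹ = Matrix.fromBlocks
      (Matrix.of fun a b : Fin 2 =>
        if a = 0 ∧ b = 0 then 1
        else if a = 1 ∧ b = 1 then -((x (Sum.inl 0)) ^ 2)⁻¹ else 0)
      0 0
      ((((x (Sum.inl 0)) ^ 2 * Real.exp (2 * x (Sum.inl 1)))⁻¹) • (h (x ∘ Sum.inr))⁻¹) := by
  have hc : (x (Sum.inl 0)) ^ 2 * Real.exp (2 * x (Sum.inl 1)) ≠ 0 :=
    mul_ne_zero (pow_ne_zero 2 hr) (Real.exp_ne_zero _)
  apply Matrix.inv_eq_left_inv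
  rw [gHatGen, Matrix.fromBlocks_multiply]
  rw [← Matrix.fromBlocks_one, Matrix.fromBlocks_inj]
  refine ⟨?_, ?_, ?_, ?_⟩
  · ext a b
    fin_cases a <;> fin_cases b <;>
      simp [Matrix.mul_apply, Fin.sum_univ_two, Matrix.one_apply] <;>
      field_simp
  · simp
  · simp
  · rw [Matrix.smul_mul, Matrix.mul_smul, smul_smul, inv_mul_cancel₀ hc,
      Matrix.nonsing_inv_mul _ (Ne.isUnit (hhn _))]
    simp

lemma pd_g_inl (h : (ι → ℝ) → Matrix ι ι ℝ) (a b : Fin 2) (i : Fin 2 ⊕ ι)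
    (x : (Fin 2 ⊕ ι) → ℝ) :
    pd i (fun y => gHatGen h y (Sum.inl a) (Sum.inl b)) x
      = if a = 1 ∧ b = 1 ∧ i = Sum.inl 0 then -(2 * x (Sum.inl 0)) else 0 := by
  fin_cases a <;> fin_cases b <;> simp only [Fin.zero_eta, Fin.mk_one]
  · rw [show (fun y => gHatGen h y (Sum.inl 0) (Sum.inl 0)) = (fun _ => (1:ℝ)) from rfl,
      pd_const]; simp
  · rw [show (fun y => gHatGen h y (Sum.inl 0) (Sum.inl 1)) = (fun _ => (0:ℝ)) from rfl,
      pd_const]; simp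
  · rw [show (fun y => gHatGen h y (Sum.inl 1) (Sum.inl 0)) = (fun _ => (0:ℝ)) from rfl,
      pd_const]; simp
  · rw [show (fun y => gHatGen h y (Sum.inl 1) (Sum.inl 1))
        = (fun y : (Fin 2 ⊕ ι) → ℝ => -(y (Sum.inl 0))^2) from rfl, pd_negsq]; simp

lemma pd_g_off (h : (ι → ℝ) → Matrix ι ι ℝ) (a : Fin 2) (c : ι) (i : Fin 2 ⊕ ι)
    (x : (Fin 2 ⊕ ι) → ℝ) :
    pd i (fun y => gHatGen h y (Sum.inl a) (Sum.inr c)) x = 0 := by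
  rw [show (fun y => gHatGen h y (Sum.inl a) (Sum.inr c)) = (fun _ => (0:ℝ)) from rfl, pd_const]

lemma pd_g_off' (h : (ι → ℝ) → Matrix ι ι ℝ) (a : Fin 2) (c : ι) (i : Fin 2 ⊕ ι)
    (x : (Fin 2 ⊕ ι) → ℝ) :
    pd i (fun y => gHatGen h y (Sum.inr c) (Sum.inl a)) x = 0 := by
  rw [show (fun y => gHatGen h y (Sum.inr c) (Sum.inl a)) = (fun _ => (0:ℝ)) from rfl, pd_const]

section Gamma
variable (h : (ι → ℝ) → Matrix ι ι ℝ) (x : (Fin 2 ⊕ ι) → ℝ)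

lemma G1 (hhn : NondegM h) (hr : x (Sum.inl 0) ≠ 0) (a n m : Fin 2) :
    christoffel (gHatGen h) (Sum.inl a) (Sum.inl n) (Sum.inl m) x
      = if a = 0 ∧ n = 1 ∧ m = 1 then x (Sum.inl 0)
        else if a = 1 ∧ n ≠ m then 1 / x (Sum.inl 0) else 0 := by
  rw [christoffel, gHat_inv h hhn x hr, Fintype.sum_sum_type]
  simp only [Matrix.fromBlocks_apply₁₁, Matrix.fromBlocks_apply₁₂, Matrix.of_apply,
    Matrix.zero_apply, zero_mul, Finset.sum_const_zero, add_zero, pd_g_inl]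
  rw [Fin.sum_univ_two]
  fin_cases a <;> fin_cases n <;> fin_cases m <;>
    simp only [Fin.zero_eta, Fin.mk_one] <;>
    · norm_num
      try field_simp
      try ring

lemma G2 (hhn : NondegM h) (hr : x (Sum.inl 0) ≠ 0) (a m : Fin 2) (c : ι) :
    christoffel (gHatGen h) (Sum.inl a) (Sum.inr c) (Sum.inl m) x = 0 := by
  rw [christoffel, gHat_inv h hhn x hr, Fintype.sum_sum_type]
  simp [pd_g_inl, pd_g_off, pd_g_off']

lemma G3 (hhn : NondegM h) (hr : x (Sum.inl 0) ≠ 0) (a : ι) (n m : Fin 2) :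
    christoffel (gHatGen h) (Sum.inr a) (Sum.inl n) (Sum.inl m) x = 0 := by
  rw [christoffel, gHat_inv h hhn x hr, Fintype.sum_sum_type]
  simp [pd_g_inl, pd_g_off, pd_g_off']

lemma G4 (hh : SmoothM h) (hhs : SymM h) (hhn : NondegM h) (hr : x (Sum.inl 0) ≠ 0)
    (a c : ι) (m : Fin 2) :
    christoffel (gHatGen h) (Sum.inr a) (Sum.inr c) (Sum.inl m) x
      = (if a = c then 1 else 0) * (if m = 0 then 1 / x (Sum.inl 0) else 1) := by
  have hc : (x (Sum.inl 0)) ^ 2 * Real.exp (2 * x (Sum.inl 1)) ≠ 0 :=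
    mul_ne_zero (pow_ne_zero 2 hr) (Real.exp_ne_zero _)
  have hsym : ∀ b, h (x ∘ Sum.inr) c b = h (x ∘ Sum.inr) b c := by
    intro b; conv_lhs => rw [← hhs (x ∘ Sum.inr)]
    rw [Matrix.transpose_apply]
  have hmul : (∑ b, (h (x ∘ Sum.inr))⁻¹ a b * h (x ∘ Sum.inr) b c)
      = if a = c then 1 else 0 := by
    rw [← Matrix.mul_apply, Matrix.nonsing_inv_mul _ (Ne.isUnit (hhn _)), Matrix.one_apply]
  rw [christoffel, gHat_inv h hhn x hr, Fintype.sum_sum_type]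
  simp only [Matrix.fromBlocks_apply₂₁, Matrix.fromBlocks_apply₂₂, Matrix.zero_apply,
    zero_mul, Finset.sum_const_zero, zero_add, Matrix.smul_apply, smul_eq_mul,
    pd_g_off, pd_g_off', pd_block h hh]
  have step : ∀ b : ι,
      ((x (Sum.inl 0) ^ 2 * Real.exp (2 * x (Sum.inl 1)))⁻¹ * (h (x ∘ Sum.inr))⁻¹ a b) *
        ((if m = 0 then 2 * x (Sum.inl 0) * Real.exp (2 * x (Sum.inl 1))
              else 2 * (x (Sum.inl 0))^2 * Real.exp (2 * x (Sum.inl 1))) * h (x ∘ Sum.inr) c b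
          - 0)
      = ((x (Sum.inl 0) ^ 2 * Real.exp (2 * x (Sum.inl 1)))⁻¹ *
          (if m = 0 then 2 * x (Sum.inl 0) * Real.exp (2 * x (Sum.inl 1))
           else 2 * (x (Sum.inl 0))^2 * Real.exp (2 * x (Sum.inl 1)))) *
        ((h (x ∘ Sum.inr))⁻¹ a b * h (x ∘ Sum.inr) b c) := by
    intro b; rw [hsym b]; ring
  rw [Finset.sum_congr rfl (fun b _ => step b), ← Finset.mul_sum, hmul]
  fin_cases m <;> simp only [Fin.zero_eta, Fin.mk_one] <;> by_cases hac : a = c <;>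
    · simp [hac]
      try field_simp
      try ring

end Gamma

lemma pd_xi0 (k : Fin 2 ⊕ ι) (x : (Fin 2 ⊕ ι) → ℝ) :
    pd k (fun y : (Fin 2 ⊕ ι) → ℝ => Real.exp (y (Sum.inl 1))) x
      = if k = Sum.inl 1 then Real.exp (x (Sum.inl 1)) else 0 := by
  have hpd : pd k (fun y : (Fin 2 ⊕ ι) → ℝ => Real.exp (y (Sum.inl 1))) x = _ :=
    pd_eq (((ContinuousLinearMap.proj (R := ℝ) (φ := fun _ : Fin 2 ⊕ ι => ℝ)
      (Sum.inl 1)).hasFDerivAt (x := x)).exp) k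
  rw [hpd]
  by_cases hk : k = Sum.inl 1 <;> simp [hk, Pi.single_apply, eq_comm]

lemma pd_xi1 (k : Fin 2 ⊕ ι) (x : (Fin 2 ⊕ ι) → ℝ) (hr : x (Sum.inl 0) ≠ 0) :
    pd k (fun y : (Fin 2 ⊕ ι) → ℝ => -(Real.exp (y (Sum.inl 1)) / y (Sum.inl 0))) x
      = if k = Sum.inl 0 then Real.exp (x (Sum.inl 1)) / (x (Sum.inl 0))^2
        else if k = Sum.inl 1 then -(Real.exp (x (Sum.inl 1)) / x (Sum.inl 0)) else 0 := by
  have hinv : HasFDerivAt (fun y : (Fin 2 ⊕ ι) → ℝ => (y (Sum.inl 0))⁻¹)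
      ((-((x (Sum.inl 0)) ^ 2)⁻¹) • ContinuousLinearMap.proj (R := ℝ)
        (φ := fun _ : Fin 2 ⊕ ι => ℝ) (Sum.inl 0)) x :=
    (hasDerivAt_inv hr).comp_hasFDerivAt x
      ((ContinuousLinearMap.proj (R := ℝ) (φ := fun _ : Fin 2 ⊕ ι => ℝ)
        (Sum.inl 0)).hasFDerivAt (x := x))
  have hexp : HasFDerivAt (fun y : (Fin 2 ⊕ ι) → ℝ => Real.exp (y (Sum.inl 1)))
      (Real.exp (x (Sum.inl 1)) • ContinuousLinearMap.proj (R := ℝ)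
        (φ := fun _ : Fin 2 ⊕ ι => ℝ) (Sum.inl 1)) x :=
    ((ContinuousLinearMap.proj (R := ℝ) (φ := fun _ : Fin 2 ⊕ ι => ℝ)
      (Sum.inl 1)).hasFDerivAt (x := x)).exp
  have heq : (fun y : (Fin 2 ⊕ ι) → ℝ => -(Real.exp (y (Sum.inl 1)) / y (Sum.inl 0)))
      = fun y => -(Real.exp (y (Sum.inl 1)) * (y (Sum.inl 0))⁻¹) := by
    funext y; rw [div_eq_mul_inv]
  rw [heq]
  have hpd : pd k (fun y : (Fin 2 ⊕ ι) → ℝ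
      => -(Real.exp (y (Sum.inl 1)) * (y (Sum.inl 0))⁻¹)) x = _ :=
    pd_eq (hexp.mul hinv).neg k
  rw [hpd]
  rcases k with a | c
  · fin_cases a <;>
      · simp [Pi.single_apply]
        field_simp
        try ring
  · simp [Pi.single_apply]


/-- for any pseudo-Riemannian `(N,h)`, the vector field
`v = e^t(∂_r − (1/r)∂_t)` on `(ℝ_{>0} × ℝ × N, dr² + r²(−dt² + e^{2t}h))`
is parallel and null (on `{r > 0}`). -/
theorem statement_13 {ι : Type} [Fintype ι] [DecidableEq ι]
    (h : (ι → ℝ) → Matrix ι ι ℝ)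
    (hh : SmoothM h) (hhs : SymM h) (hhn : NondegM h) :
    ∀ x : (Fin 2 ⊕ ι) → ℝ, x (Sum.inl 0) > 0 →
      (∀ k l, covDerVF (gHatGen h)
          (fun y => Sum.elim
            (fun a : Fin 2 =>
              if a = 0 then Real.exp (y (Sum.inl 1))
              else -(Real.exp (y (Sum.inl 1)) / y (Sum.inl 0)))
            (fun _ => 0)) k l x = 0) ∧
      (∑ i, ∑ j, gHatGen h x i j *
          (Sum.elim
            (fun a : Fin 2 =>
              if a = 0 then Real.exp (x (Sum.inl 1))
              else -(Real.exp (x (Sum.inl 1)) / x (Sum.inl 0)))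
            (fun _ => 0) i) *
          (Sum.elim
            (fun a : Fin 2 =>
              if a = 0 then Real.exp (x (Sum.inl 1))
              else -(Real.exp (x (Sum.inl 1)) / x (Sum.inl 0)))
            (fun _ => 0) j)) = 0 := by
  intro x hx
  have hr : x (Sum.inl 0) ≠ 0 := ne_of_gt hx
  constructor
  · intro k l
    rw [covDerVF, Fintype.sum_sum_type, Fin.sum_univ_two]
    simp only [Sum.elim_inr, mul_zero, Finset.sum_const_zero, add_zero, Sum.elim_inl]
    rcases l with b | d
    · rcases k with a | c
      · fin_cases b <;> fin_cases a <;>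
          simp only [Fin.zero_eta, Fin.mk_one, Sum.elim_inl, reduceIte,
            (show ¬((1:Fin 2) = (0:Fin 2)) by decide), if_false] <;>
          (first | rw [pd_xi0] | rw [pd_xi1 _ _ hr]) <;>
          rw [G1 h x hhn hr, G1 h x hhn hr] <;>
          norm_num <;>
          (try field_simp) <;>
          try ring
      · fin_cases b <;>
          simp only [Fin.zero_eta, Fin.mk_one, Sum.elim_inl, reduceIte,
            (show ¬((1:Fin 2) = (0:Fin 2)) by decide), if_false] <;>
          (first | rw [pd_xi0] | rw [pd_xi1 _ _ hr]) <;>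
          rw [G2 h x hhn hr, G2 h x hhn hr] <;>
          simp
    · rcases k with a | c
      · simp only [Sum.elim_inr]
        rw [pd_const, G3 h x hhn hr, G3 h x hhn hr]
        norm_num
      · simp only [Sum.elim_inr]
        rw [pd_const, G4 h x hh hhs hhn hr, G4 h x hh hhs hhn hr]
        by_cases hdc : d = c <;> simp [hdc] <;> field_simp <;> ring
  · rw [Fintype.sum_sum_type]
    simp only [Fintype.sum_sum_type, Sum.elim_inr, mul_zero, Finset.sum_const_zero,
      add_zero, Sum.elim_inl, zero_mul]
    rw [Fin.sum_univ_two, Fin.sum_univ_two, Fin.sum_univ_two]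
    norm_num [gHatGen, Matrix.fromBlocks_apply₁₁]
    field_simp
    ring
end
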